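/- Let X be a family of infinite subsets of ℕ. If X, ordered by almost inclusion, is σ-centered (a countable union of centered subfamilies), and X is closed under the map A ↦ A' = {⌜A ∩ n⌝ : n ∈ ℕ}, then X is countable. -/
import Mathlib


open Classical in
/-- The finite set `A ∩ {0, 1, ..., n-1}` (as a `Finset`). -/
noncomputable def initSeg (A : Set ℕ) (n : ℕ) : Finset ℕ :=
  (Finset.range n).filter (fun m => m ∈ A)

/-- `A' = {⌜A ∩ n⌝ : n ∈ ℕ}`, the set of codes of initial segments of `A`. -/
noncomputable def primeSet (e : Finset ℕ → ℕ) (A : Set ℕ) : Set ℕ :=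
  Set.range (fun n => e (initSeg A n))

/-- A subfamily is centered (in the almost-inclusion order on infinite subsets of `ℕ`)
iff every nonempty finite subfamily has infinite intersection. -/
def Centered (P : Set (Set ℕ)) : Prop :=
  ∀ s : Finset (Set ℕ), ↑s ⊆ P → s.Nonempty → (⋂ A ∈ (s : Set (Set ℕ)), A).Infinite

lemma mem_initSeg {A : Set ℕ} {n m : ℕ} : m ∈ initSeg A n ↔ m < n ∧ m ∈ A := by
  classical
  simp [initSeg]

lemma primeSet_injective {e : Finset ℕ → ℕ} (he : Function.Injective e) :
    Function.Injective (primeSet e) := by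
  have key : ∀ A B : Set ℕ, primeSet e A ⊆ primeSet e B → A ⊆ B := by
    intro A B h m hm
    have hx : e (initSeg A (m + 1)) ∈ primeSet e A := ⟨m + 1, rfl⟩
    obtain ⟨k, hk⟩ := h hx
    have hEq : initSeg B k = initSeg A (m + 1) := he hk
    have : m ∈ initSeg A (m + 1) := mem_initSeg.2 ⟨Nat.lt_succ_self m, hm⟩
    rw [← hEq] at this
    exact (mem_initSeg.1 this).2
  intro A B h
  exact Set.Subset.antisymm (key A B h.le) (key B A h.ge)

lemma primeSet_almost_disjoint {e : Finset ℕ → ℕ} (he : Function.Injective e)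
    {A B : Set ℕ} (hAB : A ≠ B) : (primeSet e A ∩ primeSet e B).Finite := by
  obtain ⟨k, hk⟩ : ∃ k, ¬ (k ∈ A ↔ k ∈ B) := by
    by_contra hcon
    push_neg at hcon
    exact hAB (Set.ext fun k => hcon k)
  have hsub : primeSet e A ∩ primeSet e B ⊆
      (fun n => e (initSeg A n)) '' Set.Iic k ∪ (fun n => e (initSeg B n)) '' Set.Iic k := by
    rintro x ⟨⟨n, hn⟩, ⟨m, hm⟩⟩
    by_cases hnk : n ≤ k
    · exact Or.inl ⟨n, hnk, hn⟩
    by_cases hmk : m ≤ k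
    · exact Or.inr ⟨m, hmk, hm⟩
    exfalso
    have hEq : initSeg A n = initSeg B m := he (hn.trans hm.symm)
    push_neg at hnk hmk
    have h1 : k ∈ initSeg A n ↔ k ∈ A := by
      rw [mem_initSeg]; exact ⟨fun h => h.2, fun h => ⟨hnk, h⟩⟩
    have h2 : k ∈ initSeg B m ↔ k ∈ B := by
      rw [mem_initSeg]; exact ⟨fun h => h.2, fun h => ⟨hmk, h⟩⟩
    rw [hEq, h2] at h1
    exact hk h1.symm
  exact Set.Finite.subset (((Set.finite_Iic k).image _).union ((Set.finite_Iic k).image _)) hsub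

/-- If `X` is a family of infinite subsets of `ℕ` which, ordered by almost inclusion,
is σ-centered (a countable union of centered subfamilies), and `X` is closed under
`A ↦ A' = {⌜A ∩ n⌝ : n ∈ ℕ}` (for an injective coding `e`), then `X` is countable. -/
theorem stmt14 (e : Finset ℕ → ℕ) (he : Function.Injective e)
    (X : Set (Set ℕ)) (hinf : ∀ A ∈ X, A.Infinite)
    (hcl : ∀ A ∈ X, primeSet e A ∈ X)
    (hσ : ∃ P : ℕ → Set (Set ℕ), (∀ n, P n ⊆ X) ∧ (∀ n, Centered (P n)) ∧
      ∀ A ∈ X, ∃ n, A ∈ P n) :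
    X.Countable := by
  classical
  obtain ⟨P, hPX, hPc, hPall⟩ := hσ
  rw [Set.countable_iff_exists_injective]
  refine ⟨fun A => Classical.choose (hPall _ (hcl A.1 A.2)), ?_⟩
  intro A B hfeq
  have hA : primeSet e A.1 ∈ P _ := Classical.choose_spec (hPall _ (hcl A.1 A.2))
  have hB : primeSet e B.1 ∈ P _ := Classical.choose_spec (hPall _ (hcl B.1 B.2))
  have hfeq' : Classical.choose (hPall _ (hcl A.1 A.2)) = Classical.choose (hPall _ (hcl B.1 B.2)) := hfeq
  rw [hfeq'] at hA
  set n := Classical.choose (hPall _ (hcl B.1 B.2)) with hn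
  by_contra hne
  have hABne : A.1 ≠ B.1 := fun h => hne (Subtype.ext h)
  have hpne : primeSet e A.1 ≠ primeSet e B.1 := fun h => hABne (primeSet_injective he h)
  have hfin := primeSet_almost_disjoint he hABne
  have hsub : (↑({primeSet e A.1, primeSet e B.1} : Finset (Set ℕ)) : Set (Set ℕ)) ⊆ P n := by
    intro C hC
    simp only [Finset.coe_insert, Finset.coe_singleton, Set.mem_insert_iff,
      Set.mem_singleton_iff] at hC
    rcases hC with h | h <;> subst h <;> assumption
  have hinfI := hPc n _ hsub ⟨_, Finset.mem_insert_self _ _⟩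
  have : (⋂ C ∈ (({primeSet e A.1, primeSet e B.1} : Finset (Set ℕ)) : Set (Set ℕ)), C)
      = primeSet e A.1 ∩ primeSet e B.1 := by
    simp
  rw [this] at hinfI
  exact hinfI hfin
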